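/- Let φ be an Arnoux-Rauzy morphism over a finite alphabet A and let u ∈ A^ℕ be an infinite word whose language L(u) is closed under reversal. Then u is rich if and only if φ(u) is rich. -/

import Mathlib

open List

/-- Apply a morphism (given by its values on letters) to a finite word. -/
def applyM {A : Type*} (φ : A → List A) (v : List A) : List A := v.flatMap φ

/-- The set of occurrences of `w` as a factor of `u`:
indices `i` such that the block of `u` of length `|w|` starting at `i` equals `w`. -/
def occs {A : Type*} [DecidableEq A] (w u : List A) : Finset ℕ :=
  (Finset.range (u.length + 1)).filter
    (fun i => i + w.length ≤ u.length ∧ (u.drop i).take w.length = w)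

/-- A morphism `φ` belongs to Class `P_ret` with marker `w` if it is injective on
letters, `w` is a palindrome, and for each letter `a` the word `φ(a)w` is a palindrome
in which `w` occurs exactly twice, namely as a prefix (position `0`) and as a suffix
(position `|φ(a)|`, distinct from `0`). -/
def IsPretWithMarker {A : Type*} [DecidableEq A] (φ : A → List A) (w : List A) : Prop :=
  Function.Injective φ ∧ w.reverse = w ∧
    ∀ a : A, (φ a ++ w).reverse = φ a ++ w ∧
      occs w (φ a ++ w) = {0, (φ a).length} ∧ (φ a).length ≠ 0

/-- The block of length `len` of the infinite word `u` starting at position `i`. -/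
def factorAt {A : Type*} (u : ℕ → A) (i len : ℕ) : List A :=
  (List.range len).map fun k => u (i + k)

/-- `i` is an occurrence of the finite word `v` in the infinite word `u`. -/
def OccursAt {A : Type*} (u : ℕ → A) (v : List A) (i : ℕ) : Prop :=
  factorAt u i v.length = v

/-- `v` belongs to the language of the infinite word `u`, i.e. `v` is a factor of `u`. -/
def InLang {A : Type*} (u : ℕ → A) (v : List A) : Prop := ∃ i, OccursAt u v i

/-- The image `φ(u) = φ(u₀)φ(u₁)φ(u₂)⋯` of an infinite word `u` under a
(non-erasing) morphism `φ`, as an infinite word. -/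
def applyInf {A : Type*} (φ : A → List A) (u : ℕ → A) (n : ℕ) : A :=
  (((List.range (n + 1)).flatMap fun i => φ (u i))).getD n (u 0)

/-- The language of `u` is closed under reversal. -/
def ClosedUnderReversal {A : Type*} (u : ℕ → A) : Prop :=
  ∀ v : List A, InLang u v → InLang u v.reverse

/-- A finite word is rich if its number of palindromic factors (including `ε`)
equals its length plus one. -/
def RichWord {A : Type*} (u : List A) : Prop :=
  {p : List A | p <:+: u ∧ p.reverse = p}.ncard = u.length + 1

/-- An infinite word is rich if all its finite prefixes are rich. -/
def RichInf {A : Type*} (u : ℕ → A) : Prop := ∀ n : ℕ, RichWord (factorAt u 0 n)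

/-- An infinite word is recurrent if each of its factors occurs infinitely often. -/
def Recurrent {A : Type*} (u : ℕ → A) : Prop :=
  ∀ v : List A, InLang u v → ∀ N : ℕ, ∃ i, N ≤ i ∧ OccursAt u v i

/-- `r` is a return word to `w` in the infinite word `u`: `wr ∈ L(u)` and `w`
occurs in `wr` exactly twice, as a prefix and as a suffix. -/
def IsReturnWord {A : Type*} [DecidableEq A] (u : ℕ → A) (w r : List A) : Prop :=
  r ≠ [] ∧ InLang u (w ++ r) ∧ occs w (w ++ r) = {0, r.length}

/-- Left extensions of `x` in the language of `u`. -/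
def leftExt {A : Type*} (u : ℕ → A) (x : List A) : Set A := {a | InLang u (a :: x)}

/-- Right extensions of `x` in the language of `u`. -/
def rightExt {A : Type*} (u : ℕ → A) (x : List A) : Set A := {b | InLang u (x ++ [b])}

/-- Bi-extensions of `x` in the language of `u`. -/
def biExt {A : Type*} (u : ℕ → A) (x : List A) : Set (A × A) :=
  {p | InLang u (p.1 :: (x ++ [p.2]))}

/-- `x` is bispecial in `u`. -/
def Bispecial {A : Type*} (u : ℕ → A) (x : List A) : Prop :=
  2 ≤ (leftExt u x).ncard ∧ 2 ≤ (rightExt u x).ncard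

/-- The bilateral order `b_u(x) = #B_u(x) − #L_u(x) − #R_u(x) + 1`. -/
noncomputable def bilateralOrder {A : Type*} (u : ℕ → A) (x : List A) : ℤ :=
  ((biExt u x).ncard : ℤ) - (leftExt u x).ncard - (rightExt u x).ncard + 1

/-- The number of palindromic extensions of `x` in `u`. -/
noncomputable def pext {A : Type*} (u : ℕ → A) (x : List A) : ℕ :=
  {a | InLang u (a :: (x ++ [a]))}.ncard

/-- Arnoux-Rauzy morphisms: the monoid of morphisms generated by permutations of the
alphabet and by the elementary morphisms `ψ_a : a ↦ a, b ↦ ab` and `ψ̄_a : a ↦ a, b ↦ ba`. -/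
inductive IsAR {A : Type*} [DecidableEq A] : (A → List A) → Prop
  | perm (π : Equiv.Perm A) : IsAR (fun a => [π a])
  | psiL (a : A) : IsAR (fun b => if b = a then [a] else [a, b])
  | psiR (a : A) : IsAR (fun b => if b = a then [a] else [b, a])
  | comp {φ ψ : A → List A} : IsAR φ → IsAR ψ → IsAR (fun a => applyM φ (ψ a))

/-- The `k`-th power `φ^k` of a morphism. -/
def powM {A : Type*} (φ : A → List A) : ℕ → A → List A
  | 0, a => [a]
  | n + 1, a => applyM (powM φ n) (φ a)

/-- A morphism is primitive if some power of it maps every letter to a word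
containing every letter. -/
def PrimitiveM {A : Type*} (φ : A → List A) : Prop :=
  ∃ k : ℕ, ∀ a b : A, b ∈ powM φ k a

/-- A (acyclic) morphism is marked: it has a rightmost conjugate `φR` whose
last-letter map is injective, and a leftmost conjugate `φL` whose first-letter map
is injective. -/
def Marked {A : Type*} (φ : A → List A) : Prop :=
  ∃ (φR φL : A → List A) (x y : List A),
    (∀ a, φ a ++ x = x ++ φR a) ∧
    (∀ a, φL a ++ y = y ++ φ a) ∧
    (∃ a b : A, (φR a).getLast? ≠ (φR b).getLast?) ∧
    (∃ a b : A, (φL a).head? ≠ (φL b).head?) ∧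
    Function.Injective (fun c => (φR c).getLast?) ∧
    Function.Injective (fun c => (φL c).head?)

/-!
By the criterion of Droubay, Justin and Pirillo, a finite word is rich exactly when each
letter creates a new palindromic suffix, i.e. a palindromic suffix that does not occur earlier.
In `ψ_a(w)a` the letter `a` marks the block boundaries, so factors of the form
`ψ_a(q)a` come from factors `q` of `w`. Hence the nonempty palindromic suffixes of `ψ_a(w)a` are
the words `ψ_a(q)a` with `q` a palindromic suffix of `w`, new palindromic suffixes correspond, and
`w` is rich iff `ψ_a(w)a` is.

If `L(u)` is closed under reversal, the factors of `ψ_a(u)` and of `ψ̄_a(u)` are exactly the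
factors of the words `ψ_a(p)a = aψ̄_a(p)` with `p ∈ L(u)`. So both morphisms preserve and reflect
richness and keep the language closed under reversal, as permutations of letters do, and
the theorem follows by induction on the Arnoux-Rauzy morphism.
-/

section PalindromicFactors

variable {A : Type*}

def HasNewPalSuffix (w : List A) (x : A) : Prop :=
  ∃ q : List A, q.reverse = q ∧ q <:+ w ++ [x] ∧ ¬ q <:+: w

lemma infix_of_palindrome_suffix_concat {w q₁ q₂ : List A} {x : A}
    (hq₁ : q₁.reverse = q₁) (hq₂ : q₂.reverse = q₂)
    (hs₁ : q₁ <:+ w ++ [x]) (hs₂ : q₂ <:+ w ++ [x]) (hlt : q₁.length < q₂.length) :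
    q₁ <:+: w := by
  have hpre : q₁ <+: q₂ := by
    rw [← List.reverse_suffix, hq₁, hq₂]
    exact List.suffix_of_suffix_length_le hs₁ hs₂ hlt.le
  obtain (rfl | ⟨t, rfl, ht⟩) := List.suffix_concat_iff.mp hs₂
  · simp at hlt
  have : q₁ <+: t := List.prefix_of_prefix_length_le hpre ⟨[x], rfl⟩ (by simp at hlt; omega)
  exact this.isInfix.trans ht.isInfix

lemma hasNewPalSuffix_nil (x : A) : HasNewPalSuffix [] x :=
  ⟨[x], rfl, List.suffix_refl _, by simp⟩

lemma head?_eq_getLast?_of_palindrome {p : List A} (hp : p.reverse = p) :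
    p.head? = p.getLast? := by
  rw [← List.getLast?_reverse, hp]

lemma head?_eq_of_palindrome_suffix_concat {q w : List A} {x : A} (hq : q.reverse = q)
    (hne : q ≠ []) (hs : q <:+ w ++ [x]) : q.head? = some x := by
  obtain rfl | ⟨t, rfl, -⟩ := List.suffix_concat_iff.mp hs
  · exact absurd rfl hne
  · simp [head?_eq_getLast?_of_palindrome hq]

variable [DecidableEq A]

def palFactors (w : List A) : Finset (List A) :=
  (w.tails.flatMap List.inits).toFinset.filter fun p => p.reverse = p

lemma mem_palFactors {w p : List A} : p ∈ palFactors w ↔ p <:+: w ∧ p.reverse = p := by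
  simp only [palFactors, Finset.mem_filter, List.mem_toFinset, List.mem_flatMap,
    List.mem_tails, List.mem_inits, List.infix_iff_prefix_suffix]
  tauto

lemma richWord_iff_card_palFactors {w : List A} :
    RichWord w ↔ (palFactors w).card = w.length + 1 := by
  rw [RichWord, ← Set.ncard_coe_finset]
  congr!
  ext p
  simp [mem_palFactors]

lemma palFactors_reverse (w : List A) : palFactors w.reverse = palFactors w := by
  ext p
  simp only [mem_palFactors, and_congr_left_iff]
  intro hp
  rw [← List.reverse_infix, hp, List.reverse_reverse]

lemma palFactors_concat_of_not_hasNewPalSuffix {w : List A} {x : A}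
    (h : ¬ HasNewPalSuffix w x) : palFactors (w ++ [x]) = palFactors w := by
  ext p
  simp only [mem_palFactors, List.infix_concat_iff, and_congr_left_iff]
  intro hp
  refine ⟨fun hi => ?_, Or.inr⟩
  by_contra hn
  exact h ⟨p, hp, hi.resolve_right hn, hn⟩

lemma card_palFactors_concat_of_hasNewPalSuffix {w : List A} {x : A}
    (h : HasNewPalSuffix w x) : (palFactors (w ++ [x])).card = (palFactors w).card + 1 := by
  have hsub : palFactors w ⊆ palFactors (w ++ [x]) := fun p hp => by
    rw [mem_palFactors] at hp ⊢
    exact ⟨hp.1.trans (List.infix_append [] w [x]), hp.2⟩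
  have hnew : ∀ q ∈ palFactors (w ++ [x]) \ palFactors w,
      q.reverse = q ∧ q <:+ w ++ [x] ∧ ¬ q <:+: w := by
    intro q hq
    simp only [Finset.mem_sdiff, mem_palFactors, List.infix_concat_iff] at hq
    exact ⟨hq.1.2, hq.1.1.resolve_right fun hi => hq.2 ⟨hi, hq.1.2⟩,
      fun hi => hq.2 ⟨hi, hq.1.2⟩⟩
  have hcard : (palFactors (w ++ [x]) \ palFactors w).card = 1 := by
    obtain ⟨q, hq, hs, hn⟩ := h
    refine Finset.card_eq_one.mpr ⟨q, Finset.eq_singleton_iff_unique_mem.mpr ⟨?_, ?_⟩⟩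
    · simp only [Finset.mem_sdiff, mem_palFactors]
      exact ⟨⟨hs.isInfix, hq⟩, fun h => hn h.1⟩
    · intro p hp
      obtain ⟨hp, hps, hpn⟩ := hnew p hp
      rcases lt_trichotomy p.length q.length with hlt | heq | hgt
      · exact (hpn (infix_of_palindrome_suffix_concat hp hq hps hs hlt)).elim
      · exact (List.suffix_of_suffix_length_le hps hs heq.le).eq_of_length heq
      · exact (hn (infix_of_palindrome_suffix_concat hq hp hs hps hgt)).elim
  rw [← Finset.card_sdiff_add_card_eq_card hsub, hcard, add_comm]

lemma card_palFactors_le (w : List A) : (palFactors w).card ≤ w.length + 1 := by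
  induction w using List.reverseRecOn with
  | nil =>
    refine Finset.card_le_one.mpr fun p hp q hq => ?_
    rw [mem_palFactors, List.infix_nil] at hp hq
    rw [hp.1, hq.1]
  | append_singleton w x ih =>
    by_cases h : HasNewPalSuffix w x
    · rw [card_palFactors_concat_of_hasNewPalSuffix h]; simpa
    · rw [palFactors_concat_of_not_hasNewPalSuffix h]; simp; omega

end PalindromicFactors

section RichWord

variable {A : Type*}

lemma richWord_concat_iff {w : List A} {x : A} :
    RichWord (w ++ [x]) ↔ RichWord w ∧ HasNewPalSuffix w x := by
  classical
  simp only [richWord_iff_card_palFactors, List.length_append, List.length_singleton]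
  have := card_palFactors_le w
  by_cases h : HasNewPalSuffix w x
  · rw [card_palFactors_concat_of_hasNewPalSuffix h]; simp [h]
  · rw [palFactors_concat_of_not_hasNewPalSuffix h]; simp [h]; omega

lemma richWord_nil : RichWord ([] : List A) := by
  classical
  simp [richWord_iff_card_palFactors, Finset.card_eq_one, Finset.eq_singleton_iff_unique_mem,
    mem_palFactors]

lemma RichWord.of_prefix {w p : List A} (hw : RichWord w) (h : p <+: w) : RichWord p := by
  induction w using List.reverseRecOn with
  | nil => rwa [List.prefix_nil.mp h]
  | append_singleton w x ih =>
    rcases List.prefix_concat_iff.mp h with rfl | h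
    · exact hw
    · exact ih (richWord_concat_iff.mp hw).1 h

lemma richWord_reverse_iff {w : List A} : RichWord w.reverse ↔ RichWord w := by
  classical
  rw [richWord_iff_card_palFactors, richWord_iff_card_palFactors, palFactors_reverse,
    List.length_reverse]

lemma RichWord.of_infix {w p : List A} (hw : RichWord w) (h : p <:+: w) : RichWord p := by
  obtain ⟨s, hps, hsw⟩ := List.infix_iff_prefix_suffix.mp h
  have hs : RichWord s := richWord_reverse_iff.mp <|
    (richWord_reverse_iff.mpr hw).of_prefix (List.reverse_prefix.mpr hsw)
  exact hs.of_prefix hps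

lemma richWord_map_iff {B : Type*} {f : A → B} (hf : Function.Injective f) {w : List A} :
    RichWord (w.map f) ↔ RichWord w := by
  have hpal : ∀ p : List A, (p.map f).reverse = p.map f ↔ p.reverse = p := fun p => by
    rw [← List.map_reverse, (List.map_injective_iff.mpr hf).eq_iff]
  have : {q | q <:+: w.map f ∧ q.reverse = q} = List.map f '' {p | p <:+: w ∧ p.reverse = p} := by
    ext q
    simp only [Set.mem_ofPred_eq, Set.mem_image, List.infix_map_iff]
    constructor
    · rintro ⟨⟨p, hp, rfl⟩, hq⟩
      exact ⟨p, ⟨hp, (hpal p).mp hq⟩, rfl⟩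
    · rintro ⟨p, ⟨hp, hpp⟩, rfl⟩
      exact ⟨⟨p, hp, rfl⟩, (hpal p).mpr hpp⟩
  rw [RichWord, RichWord, this, Set.ncard_image_of_injective _ (List.map_injective_iff.mpr hf),
    List.length_map]

end RichWord

section Morphism

variable {A : Type*} (φ : A → List A)

@[simp] lemma applyM_nil : applyM φ [] = [] := rfl

@[simp] lemma applyM_cons (c : A) (w : List A) : applyM φ (c :: w) = φ c ++ applyM φ w := rfl

@[simp] lemma applyM_append (v w : List A) : applyM φ (v ++ w) = applyM φ v ++ applyM φ w :=
  List.flatMap_append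

lemma applyM_singleton (c : A) : applyM φ [c] = φ c := by simp

lemma applyM_suffix {v w : List A} (h : v <:+ w) : applyM φ v <:+ applyM φ w := by
  obtain ⟨s, rfl⟩ := h
  exact ⟨applyM φ s, (applyM_append φ s v).symm⟩

lemma applyM_infix {v w : List A} (h : v <:+: w) : applyM φ v <:+: applyM φ w := by
  obtain ⟨s, t, rfl⟩ := h
  exact ⟨applyM φ s, applyM φ t, by simp⟩

end Morphism

section Psi

variable {A : Type*} [DecidableEq A] {a b : A}

/-- The elementary Arnoux-Rauzy morphism `ψ_a`. -/
def psi (a : A) : A → List A := fun b => if b = a then [a] else [a, b]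

/-- The elementary Arnoux-Rauzy morphism `ψ̄_a`. -/
def psiBar (a : A) : A → List A := fun b => if b = a then [a] else [b, a]

@[simp] lemma psi_self : psi a a = [a] := if_pos rfl

@[simp] lemma psi_of_ne (h : b ≠ a) : psi a b = [a, b] := if_neg h

lemma cons_psiBar (b : A) : a :: psiBar a b = psi a b ++ [a] := by
  by_cases h : b = a <;> simp [psiBar, psi, h]

lemma cons_applyM_psiBar (w : List A) : a :: applyM (psiBar a) w = applyM (psi a) w ++ [a] := by
  induction w with
  | nil => rfl
  | cons c w ih =>
    rw [applyM_cons, ← List.cons_append, cons_psiBar, List.append_assoc, List.singleton_append,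
      ih, applyM_cons, List.append_assoc]

lemma getLast?_psi (b : A) : (psi a b).getLast? = some b := by
  by_cases h : b = a <;> simp [psi, h]

lemma getLast?_applyM_psi (w : List A) : (applyM (psi a) w).getLast? = w.getLast? := by
  induction w using List.reverseRecOn with
  | nil => rfl
  | append_singleton w c _ => simp [List.getLast?_append, getLast?_psi]

lemma psi_ne_nil (b : A) : psi a b ≠ [] := by
  by_cases h : b = a <;> simp [psi, h]

lemma applyM_psi_eq_nil {w : List A} : applyM (psi a) w = [] ↔ w = [] := by
  rw [applyM, List.flatMap_eq_nil_iff]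
  exact ⟨fun h => List.eq_nil_iff_forall_not_mem.mpr fun c hc => psi_ne_nil c (h c hc),
    fun h => by simp [h]⟩

lemma applyM_psi_injective : Function.Injective (applyM (psi a)) := by
  intro v
  induction v using List.reverseRecOn with
  | nil => intro w h; exact (applyM_psi_eq_nil.mp h.symm).symm
  | append_singleton v c ih =>
    intro w h
    obtain rfl | ⟨w, d, rfl⟩ := List.eq_nil_or_concat w
    · exact absurd (applyM_psi_eq_nil.mp h) (by simp)
    rw [List.concat_eq_append] at h ⊢
    have hcd : c = d := by
      have := congrArg List.getLast? h
      rw [getLast?_applyM_psi, getLast?_applyM_psi] at this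
      simpa using this
    subst hcd
    simp only [applyM_append, applyM_singleton, List.append_cancel_right_eq] at h
    rw [ih h]

lemma reverse_psi (b : A) : (psi a b).reverse = psiBar a b := by
  by_cases h : b = a <;> simp [psi, psiBar, h]

lemma reverse_applyM_psi_concat (w : List A) :
    (applyM (psi a) w ++ [a]).reverse = applyM (psi a) w.reverse ++ [a] := by
  have : reverse ∘ psi a = psiBar a := funext reverse_psi
  rw [List.reverse_append, applyM, List.reverse_flatMap, this, List.reverse_singleton,
    List.singleton_append]
  exact cons_applyM_psiBar w.reverse

lemma applyM_psi_concat_palindrome_iff {w : List A} :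
    (applyM (psi a) w ++ [a]).reverse = applyM (psi a) w ++ [a] ↔ w.reverse = w := by
  rw [reverse_applyM_psi_concat, List.append_cancel_right_eq]
  exact applyM_psi_injective.eq_iff

lemma exists_applyM_psi_concat_eq_cons (a : A) (w : List A) :
    ∃ t, applyM (psi a) w ++ [a] = a :: t := by
  cases w with
  | nil => exact ⟨[], rfl⟩
  | cons c w => by_cases h : c = a <;> simp [h]

lemma exists_of_append_cons_eq_applyM_psi_concat {s t w : List A}
    (h : s ++ a :: t = applyM (psi a) w ++ [a]) :
    ∃ w₁ w₂, w = w₁ ++ w₂ ∧ s = applyM (psi a) w₁ ∧ a :: t = applyM (psi a) w₂ ++ [a] := by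
  induction w generalizing s with
  | nil =>
    obtain ⟨rfl, -⟩ : s = [] ∧ t = [] := by simpa [List.append_eq_singleton_iff] using h
    exact ⟨[], [], rfl, rfl, h⟩
  | cons c w ih =>
    rcases s with _ | ⟨d, s⟩
    · exact ⟨[], c :: w, rfl, rfl, h⟩
    by_cases hc : c = a
    · subst hc
      obtain ⟨rfl, hs⟩ : d = c ∧ s ++ c :: t = applyM (psi c) w ++ [c] := by simpa using h
      obtain ⟨w₁, w₂, rfl, rfl, h₂⟩ := ih hs
      exact ⟨d :: w₁, w₂, rfl, by simp, h₂⟩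
    · rcases s with _ | ⟨e, s⟩
      · simp [hc] at h; exact absurd h.2.1.symm hc
      obtain ⟨rfl, rfl, hs⟩ : d = a ∧ e = c ∧ s ++ a :: t = applyM (psi a) w ++ [a] := by
        simpa [hc] using h
      obtain ⟨w₁, w₂, rfl, rfl, h₂⟩ := ih hs
      exact ⟨e :: w₁, w₂, rfl, by simp [hc], h₂⟩

lemma exists_of_append_cons_eq_applyM_psi_concat_of_ne (hb : b ≠ a) {s t w : List A}
    (h : s ++ b :: t = applyM (psi a) w ++ [a]) :
    ∃ w₁ w₂, w = w₁ ++ b :: w₂ ∧ t = applyM (psi a) w₂ ++ [a] := by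
  induction w generalizing s with
  | nil =>
    rcases s with _ | ⟨d, s⟩
    · exact absurd (List.cons_eq_cons.mp h).1 hb
    · simp at h
  | cons c w ih =>
    rcases s with _ | ⟨d, s⟩
    · by_cases hc : c = a <;> simp [hc] at h <;> exact absurd h.1 hb
    by_cases hc : c = a
    · subst hc
      obtain ⟨w₁, w₂, rfl, h₂⟩ := ih (s := s) (by simp at h; exact h.2)
      exact ⟨c :: w₁, w₂, rfl, h₂⟩
    · rcases s with _ | ⟨e, s⟩
      · obtain ⟨-, rfl, rfl⟩ : d = a ∧ b = c ∧ t = applyM (psi a) w ++ [a] := by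
          simpa [hc] using h
        exact ⟨[], w, rfl, rfl⟩
      obtain ⟨w₁, w₂, rfl, h₂⟩ := ih (s := s) (by simp [hc] at h; exact h.2.2)
      exact ⟨c :: w₁, w₂, rfl, h₂⟩

lemma prefix_of_applyM_psi_concat_prefix {q w : List A}
    (h : applyM (psi a) q ++ [a] <+: applyM (psi a) w ++ [a]) : q <+: w := by
  obtain ⟨t, ht⟩ := h
  obtain ⟨w₁, w₂, rfl, hq, -⟩ :=
    exists_of_append_cons_eq_applyM_psi_concat (s := applyM (psi a) q) (t := t)
      (by rw [← ht]; simp)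
  rw [applyM_psi_injective hq]
  exact List.prefix_append _ _

lemma suffix_eq_applyM_psi_concat {p w : List A} (hp : p <:+ applyM (psi a) w ++ [a])
    (hhead : p.head? = some a) : ∃ q, q <:+ w ∧ p = applyM (psi a) q ++ [a] := by
  obtain ⟨s, hs⟩ := hp
  obtain ⟨t, rfl⟩ : ∃ t, p = a :: t := by
    rcases p with _ | ⟨c, t⟩ <;> simp_all
  obtain ⟨w₁, w₂, rfl, -, h₂⟩ := exists_of_append_cons_eq_applyM_psi_concat hs
  exact ⟨w₂, List.suffix_append _ _, h₂⟩

lemma infix_of_applyM_psi_concat_infix {q w : List A}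
    (h : applyM (psi a) q ++ [a] <:+: applyM (psi a) w ++ [a]) : q <:+: w := by
  obtain ⟨p, hqp, hpw⟩ := List.infix_iff_prefix_suffix.mp h
  obtain ⟨t, ht⟩ := exists_applyM_psi_concat_eq_cons a q
  obtain ⟨v, hvw, rfl⟩ := suffix_eq_applyM_psi_concat hpw (by
    obtain ⟨r, rfl⟩ := hqp; simp [ht])
  exact (prefix_of_applyM_psi_concat_prefix hqp).isInfix.trans hvw.isInfix

lemma cons_infix_of_cons_applyM_psi_concat_infix (hb : b ≠ a) {v w : List A}
    (h : b :: (applyM (psi a) v ++ [a]) <:+: applyM (psi a) w ++ [a]) : b :: v <:+: w := by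
  obtain ⟨s, t, hst⟩ := h
  obtain ⟨w₁, w₂, rfl, h₂⟩ :=
    exists_of_append_cons_eq_applyM_psi_concat_of_ne hb (s := s)
      (t := applyM (psi a) v ++ a :: t) (by rw [← hst]; simp)
  obtain ⟨r, rfl⟩ := prefix_of_applyM_psi_concat_prefix (q := v) (w := w₂)
    ⟨t, by rw [List.append_assoc, List.singleton_append, h₂]⟩
  exact ⟨w₁, r, by simp⟩

/-- In `ψ_a(w)a` every letter other than `a` is followed by `a`. -/
lemma concat_infix_applyM_psi_concat {y w : List A} (hb : b ≠ a) (hy : y.getLast? = some b)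
    (h : y <:+: applyM (psi a) w ++ [a]) : y ++ [a] <:+: applyM (psi a) w ++ [a] := by
  obtain ⟨s, t, hst⟩ := h
  obtain ⟨y, rfl⟩ : ∃ y', y = y' ++ [b] := by
    obtain rfl | ⟨y', c, rfl⟩ := List.eq_nil_or_concat y <;> simp_all
  obtain ⟨-, w₂, -, ht⟩ :=
    exists_of_append_cons_eq_applyM_psi_concat_of_ne hb (s := s ++ y) (t := t)
      (by rw [← hst]; simp)
  obtain ⟨r, hr⟩ := exists_applyM_psi_concat_eq_cons a w₂
  exact ⟨s, r, by rw [← hst, ht, hr]; simp⟩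

lemma applyM_psi_concat_infix {q w : List A} (h : q <:+: w) :
    applyM (psi a) q ++ [a] <:+: applyM (psi a) w ++ [a] := by
  obtain ⟨s, t, rfl⟩ := h
  obtain ⟨r, hr⟩ := exists_applyM_psi_concat_eq_cons a t
  exact ⟨applyM (psi a) s, r, by simp [hr]⟩

lemma exists_palindrome_of_palindrome_suffix {p w : List A} (hp : p.reverse = p)
    (hne : p ≠ []) (h : p <:+ applyM (psi a) w ++ [a]) :
    ∃ q, q.reverse = q ∧ q <:+ w ∧ p = applyM (psi a) q ++ [a] := by
  obtain ⟨q, hq, rfl⟩ :=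
    suffix_eq_applyM_psi_concat h (head?_eq_of_palindrome_suffix_concat hp hne h)
  exact ⟨q, applyM_psi_concat_palindrome_iff.mp hp, hq, rfl⟩

end Psi

section PsiRich

variable {A : Type*} [DecidableEq A] {a : A}

lemma applyM_psi_concat_prefix (w : List A) (x : A) :
    applyM (psi a) w ++ [a] <+: applyM (psi a) (w ++ [x]) := by
  by_cases hx : x = a
  · simp [hx]
  · exact ⟨[x], by simp [hx]⟩

lemma hasNewPalSuffix_applyM_psi {w : List A} {x : A} (h : HasNewPalSuffix w x) :
    HasNewPalSuffix (applyM (psi a) (w ++ [x])) a := by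
  obtain ⟨q, hq, ⟨s, hs⟩, hnew⟩ := h
  refine ⟨applyM (psi a) q ++ [a], applyM_psi_concat_palindrome_iff.mpr hq,
    ⟨applyM (psi a) s, by rw [← List.append_assoc, ← applyM_append, hs]⟩, fun hi => hnew ?_⟩
  apply infix_of_applyM_psi_concat_infix
  by_cases hx : x = a
  · simpa [hx] using hi
  · have hsplit : applyM (psi a) (w ++ [x]) = (applyM (psi a) w ++ [a]) ++ [x] := by simp [hx]
    rw [hsplit, List.infix_concat_iff] at hi
    refine hi.resolve_left fun hs => ?_
    obtain ⟨t, ht, -⟩ := (List.suffix_concat_iff.mp hs).resolve_left (by simp)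
    exact hx (List.singleton_inj.mp (List.append_inj' ht rfl).2).symm

lemma hasNewPalSuffix_of_hasNewPalSuffix_applyM_psi {w : List A} {x : A}
    (h : HasNewPalSuffix (applyM (psi a) (w ++ [x])) a) : HasNewPalSuffix w x := by
  obtain ⟨p, hp, hs, hnew⟩ := h
  have hne : p ≠ [] := by rintro rfl; exact hnew List.nil_infix
  obtain ⟨q, hq, hqs, rfl⟩ := exists_palindrome_of_palindrome_suffix hp hne hs
  exact ⟨q, hq, hqs, fun hi =>
    hnew ((applyM_psi_concat_infix hi).trans (applyM_psi_concat_prefix w x).isInfix)⟩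

/-- A new palindromic suffix `x r` of `w x` (`x ≠ a`) yields the new palindromic suffix
`x ψ_a(r)` of `ψ_a(w) a x`: it is `ψ_a(x r) a` stripped of its outer letters `a`. -/
lemma hasNewPalSuffix_applyM_psi_concat {w : List A} {x : A} (hx : x ≠ a)
    (h : HasNewPalSuffix w x) : HasNewPalSuffix (applyM (psi a) w ++ [a]) x := by
  obtain ⟨q, hq, hs, hnew⟩ := h
  have hhead :=
    head?_eq_of_palindrome_suffix_concat hq (by rintro rfl; exact hnew List.nil_infix) hs
  obtain ⟨r, rfl⟩ := List.head?_eq_some_iff.mp hhead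
  have himage : applyM (psi a) (x :: r) = a :: x :: applyM (psi a) r := by simp [hx]
  refine ⟨x :: applyM (psi a) r, ?_, ?_, fun hi => hnew ?_⟩
  · have h := applyM_psi_concat_palindrome_iff (a := a) |>.mpr hq
    rw [himage] at h
    exact List.append_cancel_right (bs := [a]) (by simpa using h)
  · have := (List.suffix_cons a _).trans (himage ▸ applyM_suffix (psi a) hs)
    simpa [hx] using this
  · have hlast : (x :: applyM (psi a) r).getLast? = some x := by
      rw [List.getLast?_cons, getLast?_applyM_psi, ← List.getLast?_cons,
        ← head?_eq_getLast?_of_palindrome hq, hhead]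
    exact cons_infix_of_cons_applyM_psi_concat_infix hx
      (by simpa using concat_infix_applyM_psi_concat hx hlast hi)

theorem richWord_applyM_psi_concat_iff {w : List A} :
    RichWord (applyM (psi a) w ++ [a]) ↔ RichWord w := by
  induction w using List.reverseRecOn with
  | nil =>
    simpa [richWord_nil] using richWord_concat_iff.mpr ⟨richWord_nil, hasNewPalSuffix_nil a⟩
  | append_singleton w x ih =>
    rw [richWord_concat_iff, richWord_concat_iff]
    constructor
    · rintro ⟨hrich, hnew⟩
      exact ⟨ih.mp (hrich.of_prefix (applyM_psi_concat_prefix w x)),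
        hasNewPalSuffix_of_hasNewPalSuffix_applyM_psi hnew⟩
    · rintro ⟨hrich, hnew⟩
      refine ⟨?_, hasNewPalSuffix_applyM_psi hnew⟩
      by_cases hx : x = a
      · simpa [hx] using ih.mpr hrich
      · simpa [hx] using richWord_concat_iff.mpr
          ⟨ih.mpr hrich, hasNewPalSuffix_applyM_psi_concat hx hnew⟩

end PsiRich

section InfiniteWords

variable {A : Type*} {u : ℕ → A}

@[simp] lemma length_factorAt (u : ℕ → A) (i n : ℕ) : (factorAt u i n).length = n := by
  simp [factorAt]

@[simp] lemma getElem_factorAt (u : ℕ → A) (i n k : ℕ) (h : k < (factorAt u i n).length) :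
    (factorAt u i n)[k] = u (i + k) := by
  simp [factorAt]

lemma factorAt_add (u : ℕ → A) (i m n : ℕ) :
    factorAt u i (m + n) = factorAt u i m ++ factorAt u (i + m) n := by
  simp [factorAt, List.range_add, Nat.add_assoc]

lemma occursAt_of_append_eq_factorAt {s v t : List A} {i n : ℕ}
    (h : s ++ v ++ t = factorAt u i n) : OccursAt u v (i + s.length) := by
  refine List.ext_getElem (by simp) fun k _ hk => ?_
  have := congrArg (·[s.length + k]?) h
  simp only [List.append_assoc, List.getElem?_append_right (Nat.le_add_right _ _),
    Nat.add_sub_cancel_left, List.getElem?_append_left hk, List.getElem?_eq_getElem hk] at this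
  have hlt : s.length + k < n := by
    have := congrArg List.length h; simp at this; omega
  simp [factorAt, hlt] at this
  simp [this, Nat.add_assoc]

lemma inLang_iff_infix_factorAt {v : List A} : InLang u v ↔ ∃ n, v <:+: factorAt u 0 n := by
  constructor
  · rintro ⟨i, hi⟩
    refine ⟨i + v.length, factorAt u 0 i, [], ?_⟩
    rw [factorAt_add, Nat.zero_add, hi, List.append_nil]
  · rintro ⟨n, s, t, h⟩
    exact ⟨_, occursAt_of_append_eq_factorAt h⟩

lemma inLang_factorAt (u : ℕ → A) (i n : ℕ) : InLang u (factorAt u i n) :=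
  ⟨i, by simp [OccursAt]⟩

lemma InLang.of_infix {v w : List A} (hw : InLang u w) (h : v <:+: w) : InLang u v := by
  obtain ⟨n, hn⟩ := inLang_iff_infix_factorAt.mp hw
  exact inLang_iff_infix_factorAt.mpr ⟨n, h.trans hn⟩

lemma InLang.exists_concat {v : List A} (hv : InLang u v) : ∃ c, InLang u (v ++ [c]) := by
  obtain ⟨i, hi⟩ := hv
  refine ⟨u (i + v.length), inLang_iff_infix_factorAt.mpr ⟨i + v.length + 1, factorAt u 0 i, [],
    ?_⟩⟩
  rw [factorAt_add, factorAt_add, Nat.zero_add, hi]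
  simp [factorAt]

lemma InLang.exists_cons (hcl : ClosedUnderReversal u) {v : List A} (hv : InLang u v) :
    ∃ c, InLang u (c :: v) := by
  obtain ⟨c, hc⟩ := (hcl v hv).exists_concat
  exact ⟨c, by simpa using hcl _ hc⟩

lemma richInf_iff_forall_inLang : RichInf u ↔ ∀ v, InLang u v → RichWord v := by
  refine ⟨fun h v hv => ?_, fun h n => h _ (inLang_factorAt u 0 n)⟩
  obtain ⟨n, hn⟩ := inLang_iff_infix_factorAt.mp hv
  exact RichWord.of_infix (h n) hn

end InfiniteWords

section ImageWords

variable {A : Type*} {φ : A → List A} {u : ℕ → A}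

def NonErasing (φ : A → List A) : Prop := ∀ c, φ c ≠ []

lemma NonErasing.length_le_length_applyM (hφ : NonErasing φ) (v : List A) :
    v.length ≤ (applyM φ v).length := by
  induction v with
  | nil => simp
  | cons c v ih =>
    have := List.length_pos_iff.mpr (hφ c)
    simp only [applyM_cons, List.length_cons, List.length_append]
    omega

lemma applyM_factorAt_prefix (φ : A → List A) (u : ℕ → A) {m n : ℕ} (h : m ≤ n) :
    applyM φ (factorAt u 0 m) <+: applyM φ (factorAt u 0 n) := by
  rw [← Nat.add_sub_cancel' h, factorAt_add, applyM_append]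
  exact List.prefix_append _ _

lemma applyInf_eq_getD (φ : A → List A) (u : ℕ → A) (n : ℕ) :
    applyInf φ u n = (applyM φ (factorAt u 0 (n + 1))).getD n (u 0) := by
  simp [applyInf, applyM, factorAt, List.flatMap_map]

lemma factorAt_applyInf (hφ : NonErasing φ) (u : ℕ → A) (m : ℕ) :
    factorAt (applyInf φ u) 0 (applyM φ (factorAt u 0 m)).length = applyM φ (factorAt u 0 m) := by
  refine List.ext_getElem (by simp) fun k hk hk' => ?_
  have hk₁ : k < (applyM φ (factorAt u 0 (k + 1))).length :=
    Nat.lt_of_lt_of_le (by simp) (hφ.length_le_length_applyM _)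
  rw [getElem_factorAt, Nat.zero_add, applyInf_eq_getD, List.getD_eq_getElem _ _ hk₁,
    (applyM_factorAt_prefix φ u (Nat.le_add_left (k + 1) m)).getElem hk₁,
    (applyM_factorAt_prefix φ u (Nat.le_add_right m (k + 1))).getElem hk']

lemma applyInf_eq_getElem (hφ : NonErasing φ) {m n : ℕ}
    (h : n < (applyM φ (factorAt u 0 m)).length) :
    applyInf φ u n = (applyM φ (factorAt u 0 m))[n] := by
  have := getElem_factorAt (applyInf φ u) 0 _ n (by simpa using h)
  rw [Nat.zero_add] at this
  rw [← this]
  exact List.getElem_of_eq (factorAt_applyInf hφ u m) _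

lemma factorAt_prefix (u : ℕ → A) (i : ℕ) {m n : ℕ} (h : m ≤ n) :
    factorAt u i m <+: factorAt u i n := by
  rw [← Nat.add_sub_cancel' h, factorAt_add]
  exact List.prefix_append _ _

lemma inLang_applyInf_iff (hφ : NonErasing φ) {v : List A} :
    InLang (applyInf φ u) v ↔ ∃ p, InLang u p ∧ v <:+: applyM φ p := by
  constructor
  · intro hv
    obtain ⟨n, hn⟩ := inLang_iff_infix_factorAt.mp hv
    refine ⟨factorAt u 0 n, inLang_factorAt u 0 n, hn.trans ?_⟩
    rw [← factorAt_applyInf hφ u n]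
    exact (factorAt_prefix _ 0 (hφ.length_le_length_applyM _ |>.trans_eq' (by simp))).isInfix
  · rintro ⟨p, hp, hvp⟩
    obtain ⟨n, hn⟩ := inLang_iff_infix_factorAt.mp hp
    have hv := hvp.trans (applyM_infix φ hn)
    rw [← factorAt_applyInf hφ u n] at hv
    exact (inLang_factorAt _ 0 _).of_infix hv

lemma richInf_applyInf_iff (hφ : NonErasing φ) :
    RichInf (applyInf φ u) ↔ ∀ p, InLang u p → RichWord (applyM φ p) := by
  simp only [richInf_iff_forall_inLang, inLang_applyInf_iff hφ]
  exact ⟨fun h p hp => h _ ⟨p, hp, List.infix_refl _⟩,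
    fun h v ⟨p, hp, hvp⟩ => (h p hp).of_infix hvp⟩

lemma closedUnderReversal_applyInf (hφ : NonErasing φ)
    (h : ∀ p, InLang u p → ∃ p', InLang u p' ∧ (applyM φ p).reverse <:+: applyM φ p') :
    ClosedUnderReversal (applyInf φ u) := by
  intro v hv
  obtain ⟨p, hp, hvp⟩ := (inLang_applyInf_iff hφ).mp hv
  obtain ⟨p', hp', hrev⟩ := h p hp
  exact (inLang_applyInf_iff hφ).mpr ⟨p', hp', (List.reverse_infix.mpr hvp).trans hrev⟩

lemma NonErasing.comp {ψ : A → List A} (hφ : NonErasing φ) (hψ : NonErasing ψ) :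
    NonErasing fun c => applyM φ (ψ c) := by
  intro c h
  have := hφ.length_le_length_applyM (ψ c)
  rw [show applyM φ (ψ c) = [] from h, List.length_nil, Nat.le_zero,
    List.length_eq_zero_iff] at this
  exact hψ c this

lemma applyM_comp (φ ψ : A → List A) (v : List A) :
    applyM (fun c => applyM φ (ψ c)) v = applyM φ (applyM ψ v) :=
  (List.flatMap_assoc ..).symm

lemma applyInf_comp {ψ : A → List A} (hφ : NonErasing φ) (hψ : NonErasing ψ) (u : ℕ → A) :
    applyInf (fun c => applyM φ (ψ c)) u = applyInf φ (applyInf ψ u) := by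
  funext n
  set Q := applyM ψ (factorAt u 0 (n + 1))
  have hn : n < (applyM φ Q).length :=
    Nat.lt_of_lt_of_le (by simp) ((hψ.length_le_length_applyM _).trans
      (hφ.length_le_length_applyM _))
  rw [applyInf_eq_getElem (hφ.comp hψ) (m := n + 1) (by rwa [applyM_comp]),
    applyInf_eq_getElem hφ (m := Q.length) (by rwa [factorAt_applyInf hψ])]
  exact List.getElem_of_eq (by rw [factorAt_applyInf hψ, applyM_comp]) _

end ImageWords

section PreservesRichness

variable {A : Type*}

def PreservesRichness (φ : A → List A) : Prop :=
  NonErasing φ ∧ ∀ u : ℕ → A, ClosedUnderReversal u →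
    (RichInf u ↔ RichInf (applyInf φ u)) ∧ ClosedUnderReversal (applyInf φ u)

lemma preservesRichness_of_injective {f : A → A} (hf : Function.Injective f) :
    PreservesRichness fun c => [f c] := by
  have hmap : ∀ p, applyM (fun c => [f c]) p = p.map f := fun p => List.map_eq_flatMap.symm
  refine ⟨fun c => List.cons_ne_nil _ _, fun u hcl => ⟨?_, ?_⟩⟩
  · simp only [richInf_iff_forall_inLang (u := u), richInf_applyInf_iff
      (fun c => List.cons_ne_nil _ _ : NonErasing fun c => [f c]), hmap, richWord_map_iff hf]
  · refine closedUnderReversal_applyInf (fun c => List.cons_ne_nil _ _) fun p hp =>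
      ⟨p.reverse, hcl p hp, ?_⟩
    rw [hmap, hmap, List.map_reverse]

lemma PreservesRichness.comp {φ ψ : A → List A} (hφ : PreservesRichness φ)
    (hψ : PreservesRichness ψ) : PreservesRichness fun c => applyM φ (ψ c) := by
  refine ⟨hφ.1.comp hψ.1, fun u hcl => ?_⟩
  obtain ⟨hrich₁, hcl₁⟩ := hψ.2 u hcl
  obtain ⟨hrich₂, hcl₂⟩ := hφ.2 _ hcl₁
  rw [applyInf_comp hφ.1 hψ.1]
  exact ⟨hrich₁.trans hrich₂, hcl₂⟩

end PreservesRichness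

section PsiPreservesRichness

variable {A : Type*} [DecidableEq A] {a : A}

/-- `h₁` and `h₂` say that the factors of `φ(u)` are exactly the factors of the words `ψ_a(p)a`
with `p ∈ L(u)`; this holds for `φ = ψ_a` and, when `L(u)` is closed under reversal, `φ = ψ̄_a`. -/
lemma PreservesRichness.of_infix_applyM_psi_concat {φ : A → List A} (hφ : NonErasing φ)
    (h₁ : ∀ p, applyM φ p <:+: applyM (psi a) p ++ [a])
    (h₂ : ∀ u : ℕ → A, ClosedUnderReversal u → ∀ p, InLang u p →
      ∃ p', InLang u p' ∧ applyM (psi a) p ++ [a] <:+: applyM φ p') :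
    PreservesRichness φ := by
  refine ⟨hφ, fun u hcl => ⟨?_, ?_⟩⟩
  · rw [richInf_iff_forall_inLang, richInf_applyInf_iff hφ]
    refine ⟨fun h p hp => ?_, fun h p hp => ?_⟩
    · exact (richWord_applyM_psi_concat_iff.mpr (h p hp)).of_infix (h₁ p)
    · obtain ⟨p', hp', hpp'⟩ := h₂ u hcl p hp
      exact richWord_applyM_psi_concat_iff.mp ((h p' hp').of_infix hpp')
  · refine closedUnderReversal_applyInf hφ fun p hp => ?_
    obtain ⟨p', hp', hpp'⟩ := h₂ u hcl p.reverse (hcl p hp)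
    refine ⟨p', hp', (List.reverse_infix.mpr (h₁ p)).trans ?_⟩
    rwa [reverse_applyM_psi_concat]

lemma nonErasing_psiBar : NonErasing (psiBar a) := fun b => by
  by_cases hb : b = a <;> simp [psiBar, hb]

lemma preservesRichness_psi : PreservesRichness (psi a) := by
  refine .of_infix_applyM_psi_concat psi_ne_nil (fun p => (List.prefix_append _ _).isInfix)
    fun u _ p hp => ?_
  obtain ⟨c, hc⟩ := hp.exists_concat
  exact ⟨p ++ [c], hc, (applyM_psi_concat_prefix p c).isInfix⟩

lemma preservesRichness_psiBar : PreservesRichness (psiBar a) := by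
  refine .of_infix_applyM_psi_concat (a := a) nonErasing_psiBar (fun p => ?_)
    fun u hcl p hp => ?_
  · rw [← cons_applyM_psiBar]
    exact (List.suffix_cons _ _).isInfix
  · obtain ⟨c, hc⟩ := hp.exists_cons hcl
    refine ⟨c :: p, hc, ?_⟩
    obtain ⟨s, hs⟩ : [a] <:+ psiBar a c := by by_cases hc : c = a <;> simp [psiBar, hc]
    rw [← cons_applyM_psiBar, applyM_cons, ← hs]
    exact ⟨s, [], by simp⟩

end PsiPreservesRichness

lemma IsAR.preservesRichness {A : Type*} [DecidableEq A] {φ : A → List A} (hφ : IsAR φ) :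
    PreservesRichness φ := by
  induction hφ with
  | perm π => exact preservesRichness_of_injective π.injective
  | psiL a => exact preservesRichness_psi
  | psiR a => exact preservesRichness_psiBar
  | comp _ _ ihφ ihψ => exact ihφ.comp ihψ

theorem arnoux_rauzy_preserves_richness_general {A : Type*} [DecidableEq A]
    (φ : A → List A) (hφ : IsAR φ) (u : ℕ → A) (hcl : ClosedUnderReversal u) :
    RichInf u ↔ RichInf (applyInf φ u) :=
  (hφ.preservesRichness.2 u hcl).1

/-- For an Arnoux-Rauzy morphism `φ` and an infinite word `u` whose
language is closed under reversal, `u` is rich iff `φ(u)` is rich. -/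
theorem arnoux_rauzy_preserves_richness {A : Type*} [Fintype A] [DecidableEq A]
    (φ : A → List A) (hφ : IsAR φ) (u : ℕ → A) (hcl : ClosedUnderReversal u) :
    RichInf u ↔ RichInf (applyInf φ u) :=
  arnoux_rauzy_preserves_richness_general φ hφ u hcl
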